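/- Let (ρ_x)_{x∈{0,1}³} be eight 4×4 density matrices such that each of the quadruples {ρ₀₀₀, ρ₀₁₁, ρ₁₀₁, ρ₁₁₀} and {ρ₀₀₁, ρ₀₁₀, ρ₁₀₀, ρ₁₁₁} consists of pairwise orthogonal rank-one orthogonal projections summing to I₄, and suppose additionally that Tr[ρ₀₀₀ρ₁₁₁] = Tr[ρ₀₁₁ρ₁₀₀] = Tr[ρ₁₀₁ρ₀₁₀] = Tr[ρ₁₁₀ρ₀₀₁] = 0 and that Tr[M₁N₁] = Tr[M₂N₂] = Tr[M₃N₃]. Then Tr[M_yN_y] = −4/3 for each y ∈ {1,2,3}, and Tr[ρ_x ρ_{x'}] = 1/3 for every pair x ≠ x' lying in opposite parity classes with x' not equal to the bitwise complement of x. -/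

import Mathlib

/-!
Write each `ρ x` as `|ψ x⟩⟨ψ x|`. Each parity class is then an orthonormal basis, and
`T i k = |⟨ψ (evenVertex i), ψ (oddVertex k)⟩|²` is a doubly stochastic `4 × 4` matrix vanishing on
the diagonal, i.e. on the complementary pairs. Expanding the products gives
`Tr[M_y N_y] = 2 s_y - 4`, where `s_y` is the weight of `T` on the matching `i ↦ flipIndex y i`, so
the hypothesis gives the three matchings equal weight. Expanding `⟨ψ i, ψ j⟩ = 0` for two vectors of
one basis in the other basis leaves only the two vectors complementary to neither, which yields two
product relations on each `2 × 2` block of `T`: opposite entries agree unless a pair of them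
vanishes. Together with the linear constraints this forces every off-diagonal entry of `T` to be
`1/3`.
-/

open Matrix
open scoped ComplexOrder

noncomputable section

abbrev Mat4 := Matrix (Fin 4) (Fin 4) ℂ

/-- parity of x₁+x₂+x₃ (addition in Fin 2 is mod 2). -/
def par (x : Fin 3 → Fin 2) : Fin 2 := x 0 + x 1 + x 2

/-- bitwise complement of x ∈ {0,1}³. -/
def bitcompl (x : Fin 3 → Fin 2) : Fin 3 → Fin 2 := fun i => x i + 1

def Mop (ρ : (Fin 3 → Fin 2) → Mat4) : Fin 3 → Mat4 :=
  ![-ρ ![0, 0, 0] - ρ ![0, 1, 1] + ρ ![1, 0, 1] + ρ ![1, 1, 0],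
    -ρ ![0, 0, 0] + ρ ![0, 1, 1] - ρ ![1, 0, 1] + ρ ![1, 1, 0],
    -ρ ![0, 0, 0] + ρ ![0, 1, 1] + ρ ![1, 0, 1] - ρ ![1, 1, 0]]

def Nop (ρ : (Fin 3 → Fin 2) → Mat4) : Fin 3 → Mat4 :=
  ![ρ ![0, 0, 1] + ρ ![0, 1, 0] - ρ ![1, 0, 0] - ρ ![1, 1, 1],
    ρ ![0, 0, 1] - ρ ![0, 1, 0] + ρ ![1, 0, 0] - ρ ![1, 1, 1],
    -ρ ![0, 0, 1] + ρ ![0, 1, 0] + ρ ![1, 0, 0] - ρ ![1, 1, 1]]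

section RankOne

variable {n : Type*} [Fintype n]

theorem exists_eq_vecMulVec_star [DecidableEq n] {p : Matrix n n ℂ} (hp : p.IsHermitian)
    (hpp : p * p = p) (htr : p.trace = 1) : ∃ ψ : n → ℂ, p = vecMulVec ψ (star ψ) := by
  have hμ01 : ∀ i, hp.eigenvalues i = 0 ∨ hp.eigenvalues i = 1 := by
    intro i
    set v : n → ℂ := ⇑(hp.eigenvectorBasis i)
    set μ := hp.eigenvalues i
    have hv : p *ᵥ v = μ • v := hp.mulVec_eigenvectorBasis i
    have hv0 : v ≠ 0 := by
      have := hp.eigenvectorBasis.orthonormal.ne_zero i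
      contrapose! this
      ext j
      simpa using congrFun this j
    have h2 : (μ * μ - μ) • v = 0 := by
      have e1 : p *ᵥ (p *ᵥ v) = (μ * μ) • v := by rw [hv, mulVec_smul, hv, smul_smul]
      have e2 : p *ᵥ (p *ᵥ v) = μ • v := by rw [mulVec_mulVec, hpp, hv]
      rw [sub_smul, ← e1, e2, sub_self]
    have : μ * (μ - 1) = 0 := by linear_combination (smul_eq_zero.mp h2).resolve_right hv0
    exact (mul_eq_zero.mp this).imp id sub_eq_zero.mp
  obtain ⟨i₀, hi₀⟩ : ∃ i₀, ∀ i, hp.eigenvalues i = if i = i₀ then 1 else 0 := by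
    have hbool : ∀ i, hp.eigenvalues i = if hp.eigenvalues i = 1 then 1 else 0 := fun i => by
      rcases hμ01 i with h | h <;> simp [h]
    have hsum : ∑ i, hp.eigenvalues i = 1 := by
      have h := hp.trace_eq_sum_eigenvalues
      rw [htr] at h
      simpa [Complex.re_sum] using congrArg Complex.re h.symm
    rw [Finset.sum_congr rfl fun i _ => hbool i, Finset.sum_boole, Nat.cast_eq_one,
      Finset.card_eq_one] at hsum
    obtain ⟨i₀, hi₀⟩ := hsum
    refine ⟨i₀, fun i => ?_⟩
    have hmem := congrArg (i ∈ ·) hi₀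
    simp only [Finset.mem_filter_univ, Finset.mem_singleton, eq_iff_iff] at hmem
    rw [hbool i]; exact if_congr hmem rfl rfl
  refine ⟨hp.eigenvectorBasis i₀, ?_⟩
  conv_lhs => rw [hp.spectral_theorem, Unitary.conjStarAlgAut_apply]
  ext a b
  simp [mul_apply, diagonal_apply, hi₀, vecMulVec_apply, apply_ite, Finset.sum_ite_eq']

def overlap (ψ φ : n → ℂ) : ℝ := Complex.normSq (star ψ ⬝ᵥ φ)

theorem overlap_comm (ψ φ : n → ℂ) : overlap ψ φ = overlap φ ψ := by
  rw [overlap, overlap, star_dotProduct, Complex.star_def, Complex.normSq_conj]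

theorem trace_vecMulVec_star_mul_vecMulVec_star (ψ φ : n → ℂ) :
    (vecMulVec ψ (star ψ) * vecMulVec φ (star φ)).trace = overlap ψ φ := by
  rw [vecMulVec_mul_vecMulVec, trace_vecMulVec, dotProduct_smul, smul_eq_mul, dotProduct_star,
    dotProduct_comm φ, overlap, Complex.star_def, Complex.mul_conj]

theorem sum_dotProduct_mul_dotProduct [DecidableEq n] {ι : Type*} [Fintype ι] {b : ι → n → ℂ}
    (hb : ∑ k, vecMulVec (b k) (star (b k)) = 1) (φ χ : n → ℂ) :
    ∑ k, (star φ ⬝ᵥ b k) * (star (b k) ⬝ᵥ χ) = star φ ⬝ᵥ χ := by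
  conv_rhs => rw [← one_mulVec χ, ← hb, sum_mulVec, dotProduct_sum]
  simp [vecMulVec_mulVec, dotProduct_smul, mul_comm]

theorem sum_overlap_eq_one [DecidableEq n] {ι : Type*} [Fintype ι] {b : ι → n → ℂ}
    (hb : ∑ k, vecMulVec (b k) (star (b k)) = 1) {φ : n → ℂ} (hφ : star φ ⬝ᵥ φ = 1) :
    ∑ k, overlap φ (b k) = 1 := by
  have h := sum_dotProduct_mul_dotProduct hb φ φ
  rw [hφ, Finset.sum_congr rfl fun k _ => by
    rw [star_dotProduct (b k) φ, Complex.star_def, Complex.mul_conj]] at h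
  exact_mod_cast h

structure IsRankOneResolution {ι : Type*} [Fintype ι] [DecidableEq n] (P : ι → Matrix n n ℂ) :
    Prop where
  isHermitian : ∀ i, (P i).IsHermitian
  mul_self : ∀ i, P i * P i = P i
  trace_eq_one : ∀ i, (P i).trace = 1
  mul_eq_zero : ∀ i j, i ≠ j → P i * P j = 0
  sum_eq_one : ∑ i, P i = 1

theorem IsRankOneResolution.exists_vecMulVec [DecidableEq n] {ι : Type*} [Fintype ι]
    [DecidableEq ι] {P : ι → Matrix n n ℂ} (hP : IsRankOneResolution P) :
    ∃ ψ : ι → n → ℂ, (∀ i, P i = vecMulVec (ψ i) (star (ψ i))) ∧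
      ∀ i j, star (ψ i) ⬝ᵥ ψ j = if i = j then 1 else 0 := by
  choose ψ hψ using fun i => exists_eq_vecMulVec_star (hP.isHermitian i) (hP.mul_self i)
    (hP.trace_eq_one i)
  refine ⟨ψ, hψ, fun i j => ?_⟩
  split_ifs with h
  · subst h
    simpa [hψ, dotProduct_comm] using hP.trace_eq_one i
  · have := trace_vecMulVec_star_mul_vecMulVec_star (ψ i) (ψ j)
    rw [← hψ, ← hψ, hP.mul_eq_zero i j h, trace_zero, eq_comm, Complex.ofReal_eq_zero] at this
    exact Complex.normSq_eq_zero.mp this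

end RankOne

section TwoBases

variable {n ι : Type*} [Fintype n] [DecidableEq n] [Fintype ι]

theorem overlap_mul_overlap_eq {b : ι → n → ℂ} (hb : ∑ k, vecMulVec (b k) (star (b k)) = 1)
    {φ χ : n → ℂ} (hφχ : star φ ⬝ᵥ χ = 0) {k l : ι} (hkl : k ≠ l)
    (hrest : ∀ m, m ≠ k → m ≠ l → (star φ ⬝ᵥ b m) * (star (b m) ⬝ᵥ χ) = 0) :
    overlap φ (b k) * overlap χ (b k) = overlap φ (b l) * overlap χ (b l) := by
  have h := sum_dotProduct_mul_dotProduct hb φ χ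
  rw [hφχ, Fintype.sum_eq_add k l hkl fun m hm => hrest m hm.1 hm.2] at h
  have := congrArg Complex.normSq (eq_neg_of_add_eq_zero_left h)
  simp only [Complex.normSq_mul, Complex.normSq_neg] at this
  rwa [overlap_comm χ, overlap_comm χ]

theorem eq_and_eq_or_eq_zero_of_mul_eq_mul {a b c d : ℝ} (hb : 0 ≤ b) (hc : 0 ≤ c)
    (hrow : a * c = b * d) (hcol : a * b = c * d) :
    (a = d ∧ b = c) ∨ (a = 0 ∧ d = 0) ∨ (b = 0 ∧ c = 0) := by
  rcases eq_or_ne b c with rfl | hbc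
  · rcases eq_or_ne b 0 with rfl | hb0
    · exact Or.inr (Or.inr ⟨rfl, rfl⟩)
    · exact Or.inl ⟨mul_right_cancel₀ hb0 (by linarith), rfl⟩
  · have hsq : b ^ 2 - c ^ 2 ≠ 0 :=
      sub_ne_zero.mpr fun h => hbc ((pow_left_inj₀ hb hc two_ne_zero).mp h)
    refine Or.inr (Or.inl ⟨?_, ?_⟩)
    · refine (mul_eq_zero.mp ?_).resolve_right hsq
      linear_combination b * hcol - c * hrow
    · refine (mul_eq_zero.mp ?_).resolve_right hsq
      linear_combination c * hcol - b * hrow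

theorem overlap_block_cases {e o : ι → n → ℂ} (he : ∑ i, vecMulVec (e i) (star (e i)) = 1)
    (ho : ∑ k, vecMulVec (o k) (star (o k)) = 1) (hdiag : ∀ m, star (e m) ⬝ᵥ o m = 0)
    {i j k l : ι} (hij : i ≠ j) (hkl : k ≠ l) (he_ij : star (e i) ⬝ᵥ e j = 0)
    (ho_kl : star (o k) ⬝ᵥ o l = 0) (hcover : ∀ m, m = i ∨ m = j ∨ m = k ∨ m = l) :
    (overlap (e i) (o k) = overlap (e j) (o l) ∧ overlap (e i) (o l) = overlap (e j) (o k)) ∨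
      (overlap (e i) (o k) = 0 ∧ overlap (e j) (o l) = 0) ∨
      (overlap (e i) (o l) = 0 ∧ overlap (e j) (o k) = 0) := by
  have hdiag' : ∀ m, star (o m) ⬝ᵥ e m = 0 := fun m => by
    rw [star_dotProduct, hdiag, star_zero]
  have hrow := overlap_mul_overlap_eq ho he_ij hkl fun m hmk hml => by
    rcases hcover m with rfl | rfl | rfl | rfl
    · rw [hdiag, zero_mul]
    · rw [hdiag', mul_zero]
    · exact absurd rfl hmk
    · exact absurd rfl hml
  have hcol := overlap_mul_overlap_eq he ho_kl hij fun m hmi hmj => by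
    rcases hcover m with rfl | rfl | rfl | rfl
    · exact absurd rfl hmi
    · exact absurd rfl hmj
    · rw [hdiag', zero_mul]
    · rw [hdiag, mul_zero]
  simp only [overlap_comm (o _)] at hcol
  exact eq_and_eq_or_eq_zero_of_mul_eq_mul (Complex.normSq_nonneg _) (Complex.normSq_nonneg _)
    hrow hcol

end TwoBases

def evenVertex : Fin 4 → Fin 3 → Fin 2 := ![![0, 0, 0], ![0, 1, 1], ![1, 0, 1], ![1, 1, 0]]

/-- `oddVertex i = bitcompl (evenVertex i)`. -/
def oddVertex : Fin 4 → Fin 3 → Fin 2 := ![![1, 1, 1], ![1, 0, 0], ![0, 1, 0], ![0, 0, 1]]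

/-- `oddVertex (flipIndex y i)` is `evenVertex i` with coordinate `y` flipped. -/
def flipIndex : Fin 3 → Fin 4 → Fin 4 := ![![1, 0, 3, 2], ![2, 3, 0, 1], ![3, 2, 1, 0]]

theorem evenVertex_injective : Function.Injective evenVertex := by decide

theorem oddVertex_injective : Function.Injective oddVertex := by decide

theorem par_evenVertex (i : Fin 4) : par (evenVertex i) = 0 := by revert i; decide

theorem par_oddVertex (i : Fin 4) : par (oddVertex i) = 1 := by revert i; decide

theorem flipIndex_ne (y : Fin 3) (i : Fin 4) : flipIndex y i ≠ i := by
  revert y i; decide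

theorem eq_one_third_of_mem_doublyStochastic {T : Matrix (Fin 4) (Fin 4) ℝ}
    (hT : T ∈ doublyStochastic ℝ (Fin 4)) (hdiag : ∀ i, T i i = 0)
    (hblock : ∀ i j k l : Fin 4, i ≠ j → k ≠ l → (∀ m, m = i ∨ m = j ∨ m = k ∨ m = l) →
      (T i k = T j l ∧ T i l = T j k) ∨ (T i k = 0 ∧ T j l = 0) ∨ (T i l = 0 ∧ T j k = 0))
    (h01 : ∑ i, T i (flipIndex 0 i) = ∑ i, T i (flipIndex 1 i))
    (h12 : ∑ i, T i (flipIndex 1 i) = ∑ i, T i (flipIndex 2 i)) :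
    ∀ i k, i ≠ k → T i k = 1 / 3 := by
  obtain ⟨hnn, hrow, hcol⟩ := mem_doublyStochastic_iff_sum.mp hT
  simp only [Fin.sum_univ_four] at hrow hcol
  simp only [Fin.sum_univ_four, flipIndex, Matrix.cons_val] at h01 h12
  have := hrow 0; have := hrow 1; have := hrow 2; have := hrow 3
  have := hcol 0; have := hcol 1; have := hcol 2; have := hcol 3
  have := hdiag 0; have := hdiag 1; have := hdiag 2; have := hdiag 3
  have := hnn 0 1; have := hnn 0 2; have := hnn 0 3; have := hnn 1 0; have := hnn 1 2
  have := hnn 1 3; have := hnn 2 0; have := hnn 2 1; have := hnn 2 3; have := hnn 3 0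
  have := hnn 3 1; have := hnn 3 2
  have B₁ := hblock 0 1 2 3 (by decide) (by decide) (by decide)
  have B₂ := hblock 0 2 1 3 (by decide) (by decide) (by decide)
  have B₃ := hblock 0 3 1 2 (by decide) (by decide) (by decide)
  have B₄ := hblock 1 2 0 3 (by decide) (by decide) (by decide)
  have B₅ := hblock 1 3 0 2 (by decide) (by decide) (by decide)
  have B₆ := hblock 2 3 0 1 (by decide) (by decide) (by decide)
  /- If every block takes its first alternative, each matching `i ↦ flipIndex y i` carries four
  equal entries, hence `1/3`; a vanishing alternative forces, through the row and column sums, a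
  pattern that contradicts another block. -/
  have key : T 0 1 = 1/3 ∧ T 0 2 = 1/3 ∧ T 0 3 = 1/3 ∧ T 1 0 = 1/3 ∧ T 1 2 = 1/3 ∧
      T 1 3 = 1/3 ∧ T 2 0 = 1/3 ∧ T 2 1 = 1/3 ∧ T 2 3 = 1/3 ∧ T 3 0 = 1/3 ∧ T 3 1 = 1/3 ∧
      T 3 2 = 1/3 := by
    rcases B₁ with ⟨_, _⟩ | ⟨_, _⟩ | ⟨_, _⟩
    all_goals rcases B₂ with ⟨_, _⟩ | ⟨_, _⟩ | ⟨_, _⟩ <;> try (exfalso; linarith)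
    all_goals rcases B₃ with ⟨_, _⟩ | ⟨_, _⟩ | ⟨_, _⟩ <;> try (exfalso; linarith)
    all_goals rcases B₄ with ⟨_, _⟩ | ⟨_, _⟩ | ⟨_, _⟩ <;> try (exfalso; linarith)
    all_goals rcases B₅ with ⟨_, _⟩ | ⟨_, _⟩ | ⟨_, _⟩ <;> try (exfalso; linarith)
    all_goals rcases B₆ with ⟨_, _⟩ | ⟨_, _⟩ | ⟨_, _⟩ <;> try (exfalso; linarith)
    all_goals refine ⟨?_, ?_, ?_, ?_, ?_, ?_, ?_, ?_, ?_, ?_, ?_, ?_⟩ <;> linarith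
  intro i k hik
  fin_cases i <;> fin_cases k <;> first | exact absurd rfl hik | simp [key]

theorem IsRankOneResolution.trace_mul_eq_one_third {n : Type*} [Fintype n] [DecidableEq n]
    {E O : Fin 4 → Matrix n n ℂ} (hE : IsRankOneResolution E) (hO : IsRankOneResolution O)
    (hC : ∀ i, (E i * O i).trace = 0)
    (h01 : ∑ i, (E i * O (flipIndex 0 i)).trace = ∑ i, (E i * O (flipIndex 1 i)).trace)
    (h12 : ∑ i, (E i * O (flipIndex 1 i)).trace = ∑ i, (E i * O (flipIndex 2 i)).trace) :
    ∀ i k, i ≠ k → (E i * O k).trace = 1 / 3 := by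
  obtain ⟨e, he, he_orth⟩ := hE.exists_vecMulVec
  obtain ⟨o, ho, ho_orth⟩ := hO.exists_vecMulVec
  have htrace : ∀ i k, (E i * O k).trace = overlap (e i) (o k) := fun i k => by
    rw [he, ho, trace_vecMulVec_star_mul_vecMulVec_star]
  have he_sum : ∑ i, vecMulVec (e i) (star (e i)) = 1 := by simpa only [he] using hE.sum_eq_one
  have ho_sum : ∑ k, vecMulVec (o k) (star (o k)) = 1 := by simpa only [ho] using hO.sum_eq_one
  have hdiag : ∀ i, star (e i) ⬝ᵥ o i = 0 := fun i => by
    simpa [htrace, overlap] using hC i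
  simp only [htrace, ← Complex.ofReal_sum, Complex.ofReal_inj] at h01 h12
  have hT := eq_one_third_of_mem_doublyStochastic (T := of fun i k => overlap (e i) (o k))
    ?_ (fun i => ?_) (fun i j k l hij hkl hcover => ?_) h01 h12
  · intro i k hik
    rw [htrace, ← of_apply (fun i k => overlap (e i) (o k)) i k, hT i k hik]
    norm_num
  · refine mem_doublyStochastic_iff_sum.mpr ⟨fun i k => Complex.normSq_nonneg _,
      fun i => sum_overlap_eq_one ho_sum (by simp [he_orth]), fun k => ?_⟩
    simpa only [of_apply, overlap_comm (e _)] using sum_overlap_eq_one he_sum (by simp [ho_orth])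
  · simp [overlap, hdiag]
  · exact overlap_block_cases he_sum ho_sum hdiag hij hkl (by simp [he_orth, hij])
      (by simp [ho_orth, hkl]) hcover

theorem Mop_mul_Nop_add (ρ : (Fin 3 → Fin 2) → Mat4) (y : Fin 3) :
    Mop ρ y * Nop ρ y + (∑ i, ρ (evenVertex i)) * ∑ k, ρ (oddVertex k) =
      2 • ∑ i, ρ (evenVertex i) * (ρ (oddVertex (flipIndex y i)) + ρ (oddVertex i)) := by
  fin_cases y <;>
    simp only [Mop, Nop, evenVertex, oddVertex, flipIndex, Fin.sum_univ_four, Matrix.cons_val,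
      Fin.zero_eta, Fin.mk_one, Fin.reduceFinMk] <;>
    noncomm_ring

theorem trace_Mop_mul_Nop {ρ : (Fin 3 → Fin 2) → Mat4} (hE : ∑ i, ρ (evenVertex i) = 1)
    (hO : ∑ k, ρ (oddVertex k) = 1) (hC : ∀ i, (ρ (evenVertex i) * ρ (oddVertex i)).trace = 0)
    (y : Fin 3) :
    (Mop ρ y * Nop ρ y).trace =
      2 * ∑ i, (ρ (evenVertex i) * ρ (oddVertex (flipIndex y i))).trace - 4 := by
  have h := congrArg trace (Mop_mul_Nop_add ρ y)
  simp only [hE, hO, mul_one, trace_add, trace_one, trace_smul, trace_sum, mul_add,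
    Finset.sum_add_distrib, hC, Finset.sum_const_zero, add_zero] at h
  simp only [Fintype.card_fin, Nat.cast_ofNat, nsmul_eq_mul] at h
  linear_combination h

theorem exists_eq_evenVertex_oddVertex {x x' : Fin 3 → Fin 2} (hpar : par x ≠ par x')
    (hx' : x' ≠ bitcompl x) : ∃ i k, i ≠ k ∧
      (x = evenVertex i ∧ x' = oddVertex k ∨ x = oddVertex k ∧ x' = evenVertex i) := by
  revert x x'; decide

/-- If each parity class of the eight density matrices consists of pairwise
orthogonal rank-one projections summing to I₄, the four complementary-pair
overlaps in opposite classes vanish, and Tr[M₁N₁] = Tr[M₂N₂] = Tr[M₃N₃],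
then Tr[M_yN_y] = −4/3 for each y, and Tr[ρ_x ρ_{x'}] = 1/3 for every pair
x ≠ x' in opposite parity classes with x' not the bitwise complement of x. -/
theorem overlaps_are_one_third
    (ρ : (Fin 3 → Fin 2) → Mat4)
    (hρ : ∀ x, (ρ x).PosSemidef)
    (hρtr : ∀ x, (ρ x).trace = 1)
    (hproj : ∀ x, ρ x * ρ x = ρ x)
    (horth : ∀ x x', x ≠ x' → par x = par x' → ρ x * ρ x' = 0)
    (hsum0 : ρ ![0, 0, 0] + ρ ![0, 1, 1] + ρ ![1, 0, 1] + ρ ![1, 1, 0] = 1)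
    (hsum1 : ρ ![0, 0, 1] + ρ ![0, 1, 0] + ρ ![1, 0, 0] + ρ ![1, 1, 1] = 1)
    (hcompl : (ρ ![0, 0, 0] * ρ ![1, 1, 1]).trace = 0 ∧
      (ρ ![0, 1, 1] * ρ ![1, 0, 0]).trace = 0 ∧
      (ρ ![1, 0, 1] * ρ ![0, 1, 0]).trace = 0 ∧
      (ρ ![1, 1, 0] * ρ ![0, 0, 1]).trace = 0)
    (hMN : (Mop ρ 0 * Nop ρ 0).trace = (Mop ρ 1 * Nop ρ 1).trace ∧
      (Mop ρ 1 * Nop ρ 1).trace = (Mop ρ 2 * Nop ρ 2).trace) :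
    (∀ y : Fin 3, (Mop ρ y * Nop ρ y).trace = -(4 / 3)) ∧
    (∀ x x', x ≠ x' → par x ≠ par x' → x' ≠ bitcompl x →
      (ρ x * ρ x').trace = 1 / 3) := by
  have hE : IsRankOneResolution fun i => ρ (evenVertex i) :=
    ⟨fun _ => (hρ _).isHermitian, fun _ => hproj _, fun _ => hρtr _,
      fun i j hij => horth _ _ (evenVertex_injective.ne hij)
        (by rw [par_evenVertex, par_evenVertex]),
      by simpa [Fin.sum_univ_four, evenVertex] using hsum0⟩
  have hO : IsRankOneResolution fun k => ρ (oddVertex k) :=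
    ⟨fun _ => (hρ _).isHermitian, fun _ => hproj _, fun _ => hρtr _,
      fun k l hkl => horth _ _ (oddVertex_injective.ne hkl)
        (by rw [par_oddVertex, par_oddVertex]),
      by rw [← hsum1]; simp [Fin.sum_univ_four, oddVertex]; abel⟩
  have hC : ∀ i, (ρ (evenVertex i) * ρ (oddVertex i)).trace = 0 := by
    obtain ⟨h₀, h₁, h₂, h₃⟩ := hcompl
    intro i; fin_cases i <;> assumption
  have hMN' := trace_Mop_mul_Nop hE.sum_eq_one hO.sum_eq_one hC
  have hT := hE.trace_mul_eq_one_third hO hC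
    (by linear_combination ((hMN' 0).symm.trans (hMN.1.trans (hMN' 1))) / 2)
    (by linear_combination ((hMN' 1).symm.trans (hMN.2.trans (hMN' 2))) / 2)
  refine ⟨fun y => ?_, fun x x' _ hpar hx' => ?_⟩
  · rw [hMN' y, Finset.sum_congr rfl fun i _ => hT i _ (flipIndex_ne y i).symm]
    norm_num
  · obtain ⟨i, k, hik, ⟨rfl, rfl⟩ | ⟨rfl, rfl⟩⟩ := exists_eq_evenVertex_oddVertex hpar hx'
    · exact hT i k hik
    · rw [trace_mul_comm]; exact hT i k hik
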